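/- Let λ ∈ ℝ^n be nonzero with λ_1 ≥ λ_2 ≥ … ≥ λ_n ≥ 0, let τ > 0 and b ∈ ℝ^n, and let ψ(y) = ⟨Π_C(yλ + b), λ⟩ − τ. Then for every y ∈ ℝ: (i) M(y) is nonempty; (ii) M ≥ 0 for every M ∈ M(y); and (iii) there exists δ > 0 such that for all y′ ∈ ℝ with |y′ − y| < δ, M(y′) ⊆ M(y) and ψ(y′) − ψ(y) − M(y′ − y) = 0 for every M ∈ M(y′). -/

import Mathlib

open Matrix

/-- The matrix `B` with `(Bx)_i = x_i − x_{i+1}` for `1 ≤ i ≤ n−1` and `(Bx)_n = x_n`. -/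
def Bmat (n : ℕ) : Matrix (Fin n) (Fin n) ℝ :=
  Matrix.of fun i j => if j = i then 1 else if (j : ℕ) = (i : ℕ) + 1 then -1 else 0

/-- `B_Γ`, the submatrix of `B` formed by the rows indexed by `Γ`. -/
def subRows {n : ℕ} (Γ : Finset (Fin n)) : Matrix {i // i ∈ Γ} (Fin n) ℝ :=
  Matrix.of fun i j => Bmat n i.1 j

/-- `H = I_n − B_Γᵀ (B_Γ B_Γᵀ)⁻¹ B_Γ`, the orthogonal projection onto the null space of
`B_Γ` (equal to `I_n` when `Γ = ∅`). -/
noncomputable def Hmat {n : ℕ} (Γ : Finset (Fin n)) : Matrix (Fin n) (Fin n) ℝ :=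
  1 - (subRows Γ)ᵀ * (subRows Γ * (subRows Γ)ᵀ)⁻¹ * subRows Γ

/-- The monotone nonnegative cone `C = {x : x₁ ≥ x₂ ≥ … ≥ xₙ ≥ 0}`. -/
def coneC (n : ℕ) : Set (Fin n → ℝ) :=
  {x | (∀ i j : Fin n, i ≤ j → x j ≤ x i) ∧ ∀ i, 0 ≤ x i}

/-- `Pc` is the Euclidean (metric) projection onto the cone `C`:
`Pc d` minimizes `½‖x − d‖²` over `x ∈ C`. -/
def IsProjC {n : ℕ} (Pc : (Fin n → ℝ) → Fin n → ℝ) : Prop :=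
  ∀ d : Fin n → ℝ, Pc d ∈ coneC n ∧
    ∀ x ∈ coneC n, (1/2) * ∑ i, (Pc d i - d i)^2 ≤ (1/2) * ∑ i, (x i - d i)^2

/-- `z(d) = (Bᵀ)⁻¹(d − Π_C(d))`. -/
noncomputable def zdual {n : ℕ} (Pc : (Fin n → ℝ) → Fin n → ℝ) (d : Fin n → ℝ) :
    Fin n → ℝ :=
  Matrix.mulVec ((Bmat n)ᵀ)⁻¹ (d - Pc d)

/-- `K(d) = {Γ : Supp(z(d)) ⊆ Γ ⊆ I(Π_C(d))}`. -/
def Kset {n : ℕ} (Pc : (Fin n → ℝ) → Fin n → ℝ) (d : Fin n → ℝ) :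
    Set (Finset (Fin n)) :=
  {Γ | (∀ i, zdual Pc d i ≠ 0 → i ∈ Γ) ∧ ∀ i ∈ Γ, (Bmat n).mulVec (Pc d) i = 0}

/-- `H(d) = {I_n − B_Γᵀ(B_Γ B_Γᵀ)⁻¹ B_Γ : Γ ∈ K(d)}`, the HS-Jacobian of `Π_C` at `d`. -/
def Hset {n : ℕ} (Pc : (Fin n → ℝ) → Fin n → ℝ) (d : Fin n → ℝ) :
    Set (Matrix (Fin n) (Fin n) ℝ) :=
  {H | ∃ Γ ∈ Kset Pc d, H = Hmat Γ}

/-- `M(y) = {λᵀHλ : H ∈ H(yλ + b)}`. -/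
def Mset {n : ℕ} (Pc : (Fin n → ℝ) → Fin n → ℝ) (lam b : Fin n → ℝ) (y : ℝ) : Set ℝ :=
  {m | ∃ H ∈ Hset Pc (y • lam + b), m = dotProduct lam (H.mulVec lam)}

/-- The dual objective `φ(y) = ½‖Π_C(yλ + b)‖² − yτ − ½‖b‖²`. -/
noncomputable def phiFun {n : ℕ} (Pc : (Fin n → ℝ) → Fin n → ℝ) (lam b : Fin n → ℝ)
    (τ : ℝ) : ℝ → ℝ :=
  fun y => (1/2) * ∑ i, (Pc (y • lam + b) i)^2 - y * τ - (1/2) * ∑ i, (b i)^2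

/-- `ψ(y) = ⟨Π_C(yλ + b), λ⟩ − τ` (the derivative `φ′` of the dual objective). -/
noncomputable def psiFun {n : ℕ} (Pc : (Fin n → ℝ) → Fin n → ℝ) (lam b : Fin n → ℝ)
    (τ : ℝ) : ℝ → ℝ :=
  fun y => (∑ i, Pc (y • lam + b) i * lam i) - τ

/-- The Euclidean norm on `ℝⁿ`. -/
noncomputable def enorm {n : ℕ} (x : Fin n → ℝ) : ℝ :=
  Real.sqrt (∑ i, (x i)^2)

/-!
`Π_C` is a metric projection onto a closed convex cone, so it is 1-Lipschitz and its residual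
`d - Π_C d` is orthogonal to `Π_C d` and nonpositive against `C`. Testing against the vectors
`x` with `B x = eᵢ` gives `z(d) ≤ 0`, and orthogonality gives complementary slackness
`zᵢ (B Π_C d)ᵢ = 0`; hence `Supp z(d) ∈ K(d)`. For `Γ ∈ K(d)` the matrix `H = Hmat Γ` is the
orthogonal projection onto `ker B_Γ`: it is positive semidefinite, fixes `Π_C d` and kills
`Bᵀ z(d) = d - Π_C d`, so `Π_C d = H d`. By continuity of `Π_C`, the conditions `zᵢ ≠ 0` and
`(B Π_C d)ᵢ ≠ 0` persist near `d`, so `K(d') ⊆ K(d)`; then `Π_C d' - Π_C d = H (d' - d)` for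
every `Γ ∈ K(d')`, which makes `ψ` exactly affine with slope `λᵀ H λ` between `y` and `y'`.
-/
open Matrix Filter Topology
open scoped InnerProductSpace

section MetricProjection

variable {F : Type*} [NormedAddCommGroup F] [InnerProductSpace ℝ F]

def IsMetricProjection (K : Set F) (P : F → F) : Prop :=
  ∀ x, P x ∈ K ∧ ∀ w ∈ K, ‖x - P x‖ ≤ ‖x - w‖

namespace IsMetricProjection

variable {K : Set F} {P : F → F}

theorem inner_sub_le_zero (hP : IsMetricProjection K P) (hK : Convex ℝ K) (x : F) {w : F}
    (hw : w ∈ K) : ⟪x - P x, w - P x⟫_ℝ ≤ 0 := by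
  have : Nonempty K := ⟨⟨P x, (hP x).1⟩⟩
  refine (norm_eq_iInf_iff_real_inner_le_zero hK (hP x).1).1 ?_ w hw
  exact le_antisymm (le_ciInf fun w => (hP x).2 w w.2)
    (ciInf_le ⟨0, by rintro _ ⟨w, rfl⟩; positivity⟩ (⟨P x, (hP x).1⟩ : K))

theorem lipschitzWith_one (hP : IsMetricProjection K P) (hK : Convex ℝ K) :
    LipschitzWith 1 P := by
  refine LipschitzWith.of_dist_le_mul fun x y => ?_
  rw [NNReal.coe_one, one_mul, dist_eq_norm, dist_eq_norm]
  have hsq : ‖P x - P y‖ ^ 2 ≤ ⟪x - y, P x - P y⟫_ℝ := by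
    have hx := hP.inner_sub_le_zero hK x (hP y).1
    have hy := hP.inner_sub_le_zero hK y (hP x).1
    have hsplit : ⟪x - y, P x - P y⟫_ℝ - ‖P x - P y‖ ^ 2
        = -⟪x - P x, P y - P x⟫_ℝ - ⟪y - P y, P x - P y⟫_ℝ := by
      rw [← real_inner_self_eq_norm_sq]
      simp only [inner_sub_left, inner_sub_right, real_inner_comm]
      ring
    linarith
  have hcs := real_inner_le_norm (x - y) (P x - P y)
  nlinarith [norm_nonneg (x - y), norm_nonneg (P x - P y)]

theorem inner_apply_eq_zero_of_cone (hP : IsMetricProjection K P) (hK : Convex ℝ K)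
    (hcone : ∀ w ∈ K, ∀ c : ℝ, 0 ≤ c → c • w ∈ K) (x : F) :
    ⟪x - P x, P x⟫_ℝ = 0 := by
  have h0 := hP.inner_sub_le_zero hK x (hcone _ (hP x).1 0 le_rfl)
  have h2 := hP.inner_sub_le_zero hK x (hcone _ (hP x).1 2 zero_le_two)
  rw [zero_smul, zero_sub, inner_neg_right] at h0
  rw [two_smul, add_sub_cancel_right] at h2
  linarith

theorem inner_le_zero_of_cone (hP : IsMetricProjection K P) (hK : Convex ℝ K)
    (hcone : ∀ w ∈ K, ∀ c : ℝ, 0 ≤ c → c • w ∈ K) (x : F) {w : F} (hw : w ∈ K) :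
    ⟪x - P x, w⟫_ℝ ≤ 0 := by
  have h := hP.inner_sub_le_zero hK x hw
  rw [inner_sub_right, hP.inner_apply_eq_zero_of_cone hK hcone x] at h
  linarith

end IsMetricProjection

end MetricProjection

section MonotoneCone

variable {n : ℕ}

theorem convex_coneC (n : ℕ) : Convex ℝ (coneC n) := by
  rintro x ⟨hxm, hx0⟩ y ⟨hym, hy0⟩ a c ha hc -
  refine ⟨fun i j hij => ?_, fun i => ?_⟩
  · simp only [Pi.add_apply, Pi.smul_apply, smul_eq_mul]
    gcongr <;> [exact hxm i j hij; exact hym i j hij]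
  · simp only [Pi.add_apply, Pi.smul_apply, smul_eq_mul]
    have := hx0 i; have := hy0 i
    positivity

theorem smul_mem_coneC {x : Fin n → ℝ} (hx : x ∈ coneC n) {c : ℝ} (hc : 0 ≤ c) :
    c • x ∈ coneC n :=
  ⟨fun i j hij => mul_le_mul_of_nonneg_left (hx.1 i j hij) hc, fun i => mul_nonneg hc (hx.2 i)⟩

variable {Pc : (Fin n → ℝ) → Fin n → ℝ}

/-- `Fin n → ℝ` carries the sup norm, so the Euclidean projection is read on `EuclideanSpace`. -/
theorem IsProjC.isMetricProjection (hPc : IsProjC Pc) :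
    IsMetricProjection (WithLp.ofLp ⁻¹' coneC n)
      (fun x : EuclideanSpace ℝ (Fin n) => WithLp.toLp 2 (Pc x.ofLp)) := by
  intro x
  refine ⟨(hPc x.ofLp).1, fun w hw => ?_⟩
  have h := (hPc x.ofLp).2 w.ofLp hw
  simp only [EuclideanSpace.norm_eq, PiLp.sub_apply, Real.norm_eq_abs, sq_abs]
  gcongr 1
  calc ∑ i, (x i - Pc x.ofLp i) ^ 2 = ∑ i, (Pc x.ofLp i - x i) ^ 2 := by
        congr! 1 with i; ring
    _ ≤ ∑ i, (w i - x i) ^ 2 := by linarith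
    _ = ∑ i, (x i - w i) ^ 2 := by congr! 1 with i; ring

theorem convex_ofLp_preimage_coneC (n : ℕ) :
    Convex ℝ (WithLp.ofLp ⁻¹' coneC n : Set (EuclideanSpace ℝ (Fin n))) :=
  (convex_coneC n).linear_preimage (WithLp.linearEquiv 2 ℝ (Fin n → ℝ)).toLinearMap

theorem IsProjC.continuous (hPc : IsProjC Pc) : Continuous Pc :=
  (PiLp.continuous_ofLp 2 _).comp <|
    ((hPc.isMetricProjection.lipschitzWith_one (convex_ofLp_preimage_coneC n)).continuous).comp
      (PiLp.continuous_toLp 2 _)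

theorem IsProjC.dotProduct_sub_self_eq_zero (hPc : IsProjC Pc) (d : Fin n → ℝ) :
    (d - Pc d) ⬝ᵥ Pc d = 0 := by
  have := hPc.isMetricProjection.inner_apply_eq_zero_of_cone (convex_ofLp_preimage_coneC n)
    (fun _ hw _ hc => smul_mem_coneC hw hc) (WithLp.toLp 2 d)
  rwa [← WithLp.toLp_sub, EuclideanSpace.inner_toLp_toLp, star_trivial, dotProduct_comm] at this

theorem IsProjC.dotProduct_sub_nonpos (hPc : IsProjC Pc) (d : Fin n → ℝ) {x : Fin n → ℝ}
    (hx : x ∈ coneC n) : (d - Pc d) ⬝ᵥ x ≤ 0 := by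
  have := hPc.isMetricProjection.inner_le_zero_of_cone (convex_ofLp_preimage_coneC n)
    (fun _ hw _ hc => smul_mem_coneC hw hc) (WithLp.toLp 2 d) (w := WithLp.toLp 2 x) hx
  rwa [← WithLp.toLp_sub, EuclideanSpace.inner_toLp_toLp, star_trivial, dotProduct_comm] at this

theorem det_Bmat (n : ℕ) : (Bmat n).det = 1 := by
  rw [det_of_isUpperTriangular]
  · simp [Bmat]
  · intro i j hij
    have : (j : ℕ) < i := hij
    simp only [Bmat, of_apply]
    rw [if_neg (by omega), if_neg (by omega)]

theorem Bmat_mulVec_apply (x : Fin n → ℝ) (i : Fin n) :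
    (Bmat n *ᵥ x) i = x i - if h : (i : ℕ) + 1 < n then x ⟨i + 1, h⟩ else 0 := by
  have hrow : ∀ j, Bmat n i j * x j
      = (if j = i then x j else 0) - if (j : ℕ) = i + 1 then x j else 0 := by
    intro j
    simp only [Bmat, of_apply]
    split_ifs with h1 h2 <;> first | (subst h1; omega) | ring
  simp only [mulVec, dotProduct, hrow, Finset.sum_sub_distrib, Finset.sum_ite_eq',
    Finset.mem_univ, if_true]
  congr 1
  split_ifs with h
  · rw [Fintype.sum_eq_single ⟨i + 1, h⟩ fun j hj => if_neg fun hj' => hj (Fin.ext hj'),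
      if_pos rfl]
  · exact Finset.sum_eq_zero fun j _ => if_neg (by omega)

theorem Bmat_mulVec_nonneg {x : Fin n → ℝ} (hx : x ∈ coneC n) (i : Fin n) :
    0 ≤ (Bmat n *ᵥ x) i := by
  rw [Bmat_mulVec_apply]
  split_ifs with h
  · exact sub_nonneg.2 (hx.1 _ _ (Fin.le_def.2 (Nat.le_succ _)))
  · exact sub_nonneg.2 ((sub_zero (x i)).symm ▸ hx.2 i)

theorem Bmat_mulVec_eq_single (k : Fin n) :
    Bmat n *ᵥ (fun j => if j ≤ k then 1 else 0) = Pi.single k 1 := by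
  ext i
  rw [Bmat_mulVec_apply, Pi.single_apply]
  simp only [Fin.le_def, Fin.ext_iff]
  split_ifs <;> first | omega | norm_num

theorem indicator_le_mem_coneC (k : Fin n) : (fun j => if j ≤ k then (1 : ℝ) else 0) ∈ coneC n :=
  ⟨fun i j hij => by dsimp only; split_ifs <;> first | exact absurd (hij.trans ‹_›) ‹_› | norm_num,
   fun i => by dsimp only; split_ifs <;> norm_num⟩

theorem transpose_Bmat_mulVec_zdual (Pc : (Fin n → ℝ) → Fin n → ℝ) (d : Fin n → ℝ) :
    (Bmat n)ᵀ *ᵥ zdual Pc d = d - Pc d := by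
  rw [zdual, mulVec_mulVec, mul_nonsing_inv _ (by simp [det_Bmat]), one_mulVec]

theorem zdual_dotProduct_Bmat_mulVec (Pc : (Fin n → ℝ) → Fin n → ℝ) (d x : Fin n → ℝ) :
    zdual Pc d ⬝ᵥ (Bmat n *ᵥ x) = (d - Pc d) ⬝ᵥ x := by
  rw [dotProduct_mulVec, ← mulVec_transpose, transpose_Bmat_mulVec_zdual]

theorem IsProjC.zdual_nonpos (hPc : IsProjC Pc) (d : Fin n → ℝ) (k : Fin n) :
    zdual Pc d k ≤ 0 := by
  have h := hPc.dotProduct_sub_nonpos d (indicator_le_mem_coneC k)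
  rwa [← zdual_dotProduct_Bmat_mulVec, Bmat_mulVec_eq_single, dotProduct_single, mul_one] at h

theorem IsProjC.Bmat_mulVec_eq_zero_of_zdual_ne_zero (hPc : IsProjC Pc) (d : Fin n → ℝ)
    {i : Fin n} (hz : zdual Pc d i ≠ 0) : (Bmat n *ᵥ Pc d) i = 0 := by
  have hsum : zdual Pc d ⬝ᵥ (Bmat n *ᵥ Pc d) = 0 := by
    rw [zdual_dotProduct_Bmat_mulVec, hPc.dotProduct_sub_self_eq_zero]
  have hterm := (Finset.sum_eq_zero_iff_of_nonpos fun j _ => mul_nonpos_of_nonpos_of_nonneg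
    (hPc.zdual_nonpos d j) (Bmat_mulVec_nonneg (hPc d).1 j)).1 hsum i (Finset.mem_univ i)
  exact (mul_eq_zero.1 hterm).resolve_left hz

theorem IsProjC.filter_zdual_ne_zero_mem_Kset (hPc : IsProjC Pc) (d : Fin n → ℝ) :
    Finset.univ.filter (fun i => zdual Pc d i ≠ 0) ∈ Kset Pc d :=
  ⟨fun _ hi => Finset.mem_filter.2 ⟨Finset.mem_univ _, hi⟩,
   fun _ hi => hPc.Bmat_mulVec_eq_zero_of_zdual_ne_zero d (Finset.mem_filter.1 hi).2⟩

theorem IsProjC.eventually_Kset_subset (hPc : IsProjC Pc) (d : Fin n → ℝ) :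
    ∀ᶠ d' in 𝓝 d, Kset Pc d' ⊆ Kset Pc d := by
  have hz : Continuous (zdual Pc) :=
    continuous_const.matrix_mulVec (continuous_id.sub hPc.continuous)
  have hB : Continuous fun d => Bmat n *ᵥ Pc d :=
    continuous_const.matrix_mulVec hPc.continuous
  have hzne : ∀ᶠ d' in 𝓝 d, ∀ i, zdual Pc d i ≠ 0 → zdual Pc d' i ≠ 0 :=
    eventually_all.2 fun i => eventually_imp_distrib_left.2 fun h =>
      ((continuous_apply i).comp hz).continuousAt.eventually_ne h
  have hBne : ∀ᶠ d' in 𝓝 d, ∀ i, (Bmat n *ᵥ Pc d) i ≠ 0 → (Bmat n *ᵥ Pc d') i ≠ 0 :=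
    eventually_all.2 fun i => eventually_imp_distrib_left.2 fun h =>
      ((continuous_apply i).comp hB).continuousAt.eventually_ne h
  filter_upwards [hzne, hBne] with d' hzne hBne Γ hΓ
  exact ⟨fun i hi => hΓ.1 i (hzne i hi), fun i hi => not_not.1 fun h => hBne i h (hΓ.2 i hi)⟩

end MonotoneCone

section NullProj

variable {m k R : Type*} [Fintype m] [DecidableEq m] [Fintype k] [DecidableEq k] [CommRing R]

noncomputable def nullProj (A : Matrix m k R) : Matrix k k R :=
  1 - Aᵀ * (A * Aᵀ)⁻¹ * A

variable {A : Matrix m k R}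

theorem transpose_nullProj (A : Matrix m k R) : (nullProj A)ᵀ = nullProj A := by
  rw [nullProj, transpose_sub, transpose_one, transpose_mul, transpose_mul, transpose_transpose,
    transpose_nonsing_inv, transpose_mul, transpose_transpose, Matrix.mul_assoc]

theorem nullProj_mul_transpose (hA : IsUnit (A * Aᵀ).det) : nullProj A * Aᵀ = 0 := by
  rw [nullProj, Matrix.sub_mul, Matrix.one_mul, Matrix.mul_assoc _ A, Matrix.mul_assoc Aᵀ,
    nonsing_inv_mul _ hA, Matrix.mul_one, sub_self]

theorem nullProj_mulVec_of_mulVec_eq_zero {x : k → R} (hx : A *ᵥ x = 0) :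
    nullProj A *ᵥ x = x := by
  rw [nullProj, sub_mulVec, one_mulVec, ← mulVec_mulVec, hx, mulVec_zero, sub_zero]

theorem transpose_nullProj_mul_self (hA : IsUnit (A * Aᵀ).det) :
    (nullProj A)ᵀ * nullProj A = nullProj A := by
  calc (nullProj A)ᵀ * nullProj A = nullProj A * (1 - Aᵀ * (A * Aᵀ)⁻¹ * A) := by
        rw [transpose_nullProj, nullProj]
    _ = nullProj A := by
      rw [Matrix.mul_sub, Matrix.mul_one, ← Matrix.mul_assoc, ← Matrix.mul_assoc,
        nullProj_mul_transpose hA, Matrix.zero_mul, Matrix.zero_mul, sub_zero]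

theorem posSemidef_nullProj {A : Matrix m k ℝ} (hA : IsUnit (A * Aᵀ).det) :
    (nullProj A).PosSemidef := by
  rw [← transpose_nullProj_mul_self hA, ← conjTranspose_eq_transpose_of_trivial]
  exact posSemidef_conjTranspose_mul_self _

end NullProj

theorem isUnit_det_self_mul_transpose {m k R : Type*} [Fintype m] [DecidableEq m] [Fintype k]
    [Field R] [LinearOrder R] [IsStrictOrderedRing R] {A : Matrix m k R}
    (hA : LinearIndependent R A.row) : IsUnit (A * Aᵀ).det := by
  rw [← isUnit_iff_isUnit_det, ← linearIndependent_rows_iff_isUnit,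
    linearIndependent_iff_card_eq_finrank_span, Set.finrank, ← rank_eq_finrank_span_row,
    rank_self_mul_transpose, hA.rank_matrix]

section Hmat

variable {n : ℕ}

theorem isUnit_det_subRows_mul_transpose (Γ : Finset (Fin n)) :
    IsUnit (subRows Γ * (subRows Γ)ᵀ).det := by
  have hB : LinearIndependent ℝ (Bmat n).row :=
    linearIndependent_rows_of_isUnit ((isUnit_iff_isUnit_det _).2 (by simp [det_Bmat]))
  exact isUnit_det_self_mul_transpose (hB.comp ((↑) : Γ → Fin n) Subtype.val_injective)

theorem posSemidef_Hmat (Γ : Finset (Fin n)) : (Hmat Γ).PosSemidef :=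
  posSemidef_nullProj (isUnit_det_subRows_mul_transpose Γ)

theorem transpose_Bmat_mulVec_of_support_subset (Γ : Finset (Fin n)) {w : Fin n → ℝ}
    (hw : ∀ i ∉ Γ, w i = 0) : (Bmat n)ᵀ *ᵥ w = (subRows Γ)ᵀ *ᵥ fun i => w i := by
  ext j
  simp only [mulVec, dotProduct, transpose_apply, subRows, of_apply]
  rw [← Finset.sum_subset (Finset.subset_univ Γ) fun i _ hi => by rw [hw i hi, mul_zero],
    ← Finset.sum_attach Γ, Finset.univ_eq_attach]

theorem Hmat_mulVec_of_mem_Kset {Pc : (Fin n → ℝ) → Fin n → ℝ} {d : Fin n → ℝ}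
    {Γ : Finset (Fin n)} (hΓ : Γ ∈ Kset Pc d) : Hmat Γ *ᵥ d = Pc d := by
  have hd : d = Pc d + (subRows Γ)ᵀ *ᵥ fun i => zdual Pc d i := by
    rw [← transpose_Bmat_mulVec_of_support_subset Γ fun i hi => not_not.1 fun h => hi (hΓ.1 i h),
      transpose_Bmat_mulVec_zdual, add_sub_cancel]
  have hPd : subRows Γ *ᵥ Pc d = 0 := funext fun i => hΓ.2 i.1 i.2
  change nullProj (subRows Γ) *ᵥ d = Pc d
  nth_rw 1 [hd]
  rw [mulVec_add, mulVec_mulVec, nullProj_mul_transpose (isUnit_det_subRows_mul_transpose Γ),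
    zero_mulVec, add_zero, nullProj_mulVec_of_mulVec_eq_zero hPd]

end Hmat

theorem psiFun_sub_eq_of_mem_Kset {n : ℕ} {Pc : (Fin n → ℝ) → Fin n → ℝ} {lam b : Fin n → ℝ}
    (τ : ℝ) {y y' : ℝ} {Γ : Finset (Fin n)} (hΓ' : Γ ∈ Kset Pc (y' • lam + b))
    (hΓ : Γ ∈ Kset Pc (y • lam + b)) :
    psiFun Pc lam b τ y' - psiFun Pc lam b τ y = lam ⬝ᵥ (Hmat Γ *ᵥ lam) * (y' - y) := by
  have hdiff : Pc (y' • lam + b) - Pc (y • lam + b) = (y' - y) • Hmat Γ *ᵥ lam := by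
    rw [← Hmat_mulVec_of_mem_Kset hΓ', ← Hmat_mulVec_of_mem_Kset hΓ, ← mulVec_sub,
      ← mulVec_smul, add_sub_add_right_eq_sub, sub_smul]
  change Pc (y' • lam + b) ⬝ᵥ lam - τ - (Pc (y • lam + b) ⬝ᵥ lam - τ) = _
  rw [sub_sub_sub_cancel_right, ← sub_dotProduct, hdiff, smul_dotProduct, dotProduct_comm,
    smul_eq_mul, mul_comm]

theorem stmt12_general {n : ℕ} (lam : Fin n → ℝ)
    (τ : ℝ) (b : Fin n → ℝ)
    (Pc : (Fin n → ℝ) → Fin n → ℝ) (hPc : IsProjC Pc) (y : ℝ) :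
    (Mset Pc lam b y).Nonempty ∧
    (∀ M ∈ Mset Pc lam b y, 0 ≤ M) ∧
    ∃ δ > (0:ℝ), ∀ y' : ℝ, |y' - y| < δ →
      Mset Pc lam b y' ⊆ Mset Pc lam b y ∧
      ∀ M ∈ Mset Pc lam b y',
        psiFun Pc lam b τ y' - psiFun Pc lam b τ y - M * (y' - y) = 0 := by
  have hK : ∀ᶠ y' in 𝓝 y, Kset Pc (y' • lam + b) ⊆ Kset Pc (y • lam + b) :=
    ((continuous_id.smul continuous_const).add continuous_const).tendsto y |>.eventually
      (hPc.eventually_Kset_subset _)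
  obtain ⟨δ, hδ, hδK⟩ := Metric.eventually_nhds_iff.1 hK
  refine ⟨⟨_, _, ⟨_, hPc.filter_zdual_ne_zero_mem_Kset _, rfl⟩, rfl⟩, ?_, δ, hδ, fun y' hy' => ?_⟩
  · rintro _ ⟨_, ⟨Γ, -, rfl⟩, rfl⟩
    simpa using (posSemidef_Hmat Γ).dotProduct_mulVec_nonneg lam
  have hsub : Kset Pc (y' • lam + b) ⊆ Kset Pc (y • lam + b) := hδK (by rwa [Real.dist_eq])
  refine ⟨?_, ?_⟩
  · rintro _ ⟨_, ⟨Γ, hΓ, rfl⟩, rfl⟩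
    exact ⟨_, ⟨Γ, hsub hΓ, rfl⟩, rfl⟩
  · rintro _ ⟨_, ⟨Γ, hΓ, rfl⟩, rfl⟩
    rw [psiFun_sub_eq_of_mem_Kset τ hΓ (hsub hΓ), sub_self]

/-- with `ψ(y) = ⟨Π_C(yλ + b), λ⟩ − τ`, for every `y`:
(i) `M(y)` is nonempty; (ii) every `M ∈ M(y)` is nonnegative; and (iii) there is
`δ > 0` such that for all `y'` with `|y' − y| < δ`, `M(y') ⊆ M(y)` and
`ψ(y') − ψ(y) − M(y' − y) = 0` for every `M ∈ M(y')`. -/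
theorem stmt12 {n : ℕ} (hn : 0 < n) (lam : Fin n → ℝ)
    (hmono : ∀ i j : Fin n, i ≤ j → lam j ≤ lam i)
    (hnonneg : ∀ i, 0 ≤ lam i) (hlam : lam ≠ 0)
    (τ : ℝ) (hτ : 0 < τ) (b : Fin n → ℝ)
    (Pc : (Fin n → ℝ) → Fin n → ℝ) (hPc : IsProjC Pc) (y : ℝ) :
    (Mset Pc lam b y).Nonempty ∧
    (∀ M ∈ Mset Pc lam b y, 0 ≤ M) ∧
    ∃ δ > (0:ℝ), ∀ y' : ℝ, |y' - y| < δ →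
      Mset Pc lam b y' ⊆ Mset Pc lam b y ∧
      ∀ M ∈ Mset Pc lam b y',
        psiFun Pc lam b τ y' - psiFun Pc lam b τ y - M * (y' - y) = 0 :=
  stmt12_general lam τ b Pc hPc y
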